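/- Let N ≥ 1 and let μ and ν be finite Borel measures on the unit sphere S^{N-1} of Euclidean space ℝ^N such that μ linearly majorizes ν. Then for every sublinear functional p : ℝ^N → ℝ (i.e., p is positively homogeneous and subadditive) one has ∫_{S^{N-1}} p dμ ≥ ∫_{S^{N-1}} p dν. (Reshetnyak's theorem.) -/

import Mathlib

/-!
Cover the sphere by finitely many balls of radius `δ` and refine them to a Borel partition
`U k` with centres `c k`. Hahn–Banach gives linear `ℓ k ≤ p` with `ℓ k (c k) = p (c k)`, and as
`p ≤ C ‖·‖` this forces `p ≤ ℓ k + 2Cδ` on `U k`. Hence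
`∫ p dν ≤ ∑ ∫_{U k} ℓ k dν + 2Cδ ν(S) = ∑ ∫ ℓ k dμ_k + 2Cδ ν(S) ≤ ∫ p dμ + 2Cδ ν(S)`,
the equality being linear majorization and the last step `ℓ k ≤ p`; now let `δ → 0`.
-/

open MeasureTheory

/-- The unit sphere `S^{N-1}` of Euclidean space `ℝ^N`. -/
abbrev UnitSphere (N : ℕ) : Set (EuclideanSpace ℝ (Fin N)) :=
  Metric.sphere (0 : EuclideanSpace ℝ (Fin N)) 1

/-- `LinMaj N μ ν` : the measure `μ` linearly majorizes the measure `ν` on the unit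
sphere `S^{N-1}`, i.e. for every decomposition of the sphere into finitely many pairwise
disjoint Borel sets `U 1, …, U m` there are finite Borel measures `μ 1, …, μ m` summing
to `μ` such that for every `k` and every continuous linear functional `ℓ` on `ℝ^N`,
`∫ ℓ dμ_k = ∫_{U k} ℓ dν`. -/
def LinMaj (N : ℕ) (μ ν : Measure (UnitSphere N)) : Prop :=
  ∀ (m : ℕ) (U : Fin m → Set (UnitSphere N)),
    (∀ k, MeasurableSet (U k)) →
    (Pairwise fun i j => Disjoint (U i) (U j)) →
    (⋃ k, U k) = Set.univ →
    ∃ μk : Fin m → Measure (UnitSphere N),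
      (∀ k, IsFiniteMeasure (μk k)) ∧
      μ = ∑ k, μk k ∧
      ∀ (k : Fin m) (ℓ : EuclideanSpace ℝ (Fin N) →L[ℝ] ℝ),
        ∫ z, ℓ (z : EuclideanSpace ℝ (Fin N)) ∂(μk k)
          = ∫ z in U k, ℓ (z : EuclideanSpace ℝ (Fin N)) ∂ν

open Set Filter Topology Metric Function

structure IsSublinear {E : Type*} [AddCommGroup E] [Module ℝ E] (p : E → ℝ) : Prop where
  map_smul_of_nonneg : ∀ t : ℝ, 0 ≤ t → ∀ x, p (t • x) = t * p x
  map_add_le : ∀ x y, p (x + y) ≤ p x + p y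

namespace IsSublinear

section Module

variable {E : Type*} [AddCommGroup E] [Module ℝ E] {p : E → ℝ}

theorem map_zero (hp : IsSublinear p) : p 0 = 0 := by
  simpa using hp.map_smul_of_nonneg 0 le_rfl 0

theorem convexOn (hp : IsSublinear p) : ConvexOn ℝ univ p :=
  ⟨convex_univ, fun x _ y _ a b ha hb _ => by
    simpa only [hp.map_smul_of_nonneg a ha, hp.map_smul_of_nonneg b hb, smul_eq_mul]
      using hp.map_add_le (a • x) (b • y)⟩

/-- Hahn–Banach, extending `c • z ↦ c * p z` from the line through `z`. -/
theorem exists_linearMap_le_eq (hp : IsSublinear p) (z : E) :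
    ∃ ℓ : E →ₗ[ℝ] ℝ, (∀ x, ℓ x ≤ p x) ∧ ℓ z = p z := by
  let f : E →ₗ.[ℝ] ℝ := LinearPMap.mkSpanSingleton' z (p z) fun c hc => by
    rcases smul_eq_zero.mp hc with rfl | rfl
    · simp
    · simp [hp.map_zero]
  have hf : ∀ x : f.domain, f x ≤ p x := by
    rintro ⟨x, hx⟩
    obtain ⟨c, rfl⟩ := Submodule.mem_span_singleton.mp hx
    rw [LinearPMap.mkSpanSingleton'_apply, RingHom.id_apply, smul_eq_mul]
    change c * p z ≤ p (c • z)
    rcases le_total 0 c with hc | hc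
    · rw [hp.map_smul_of_nonneg c hc]
    · have h0 : 0 ≤ p z + p (-z) := by simpa [hp.map_zero] using hp.map_add_le z (-z)
      rw [show c • z = (-c) • -z by module, hp.map_smul_of_nonneg (-c) (neg_nonneg.mpr hc)]
      nlinarith
  obtain ⟨ℓ, hℓf, hℓp⟩ := exists_extension_of_le_sublinear f p
    (fun c hc => hp.map_smul_of_nonneg c hc.le) hp.map_add_le hf
  exact ⟨ℓ, hℓp, (hℓf ⟨z, Submodule.mem_span_singleton_self z⟩).trans
    (LinearPMap.mkSpanSingleton'_apply_self _ _ _ _)⟩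

end Module

section FiniteDimensional

variable {E : Type*} [NormedAddCommGroup E] [NormedSpace ℝ E] [FiniteDimensional ℝ E]
  {p : E → ℝ}

theorem continuous (hp : IsSublinear p) : Continuous p :=
  continuousOn_univ.mp (hp.convexOn.continuousOn isOpen_univ)

theorem exists_le_mul_norm (hp : IsSublinear p) : ∃ C, 0 ≤ C ∧ ∀ x, p x ≤ C * ‖x‖ := by
  obtain ⟨C, hC⟩ := (isCompact_closedBall (0 : E) 1).exists_bound_of_continuousOn
    hp.continuous.continuousOn
  refine ⟨C, (norm_nonneg _).trans (hC 0 (mem_closedBall_self zero_le_one)), fun x => ?_⟩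
  rcases eq_or_ne x 0 with rfl | hx
  · simp [hp.map_zero]
  · have hx' : ‖x‖ ≠ 0 := norm_ne_zero_iff.mpr hx
    have hunit : ‖x‖⁻¹ • x ∈ closedBall (0 : E) 1 := by
      simp [norm_smul, inv_mul_cancel₀ hx']
    calc p x = ‖x‖ * p (‖x‖⁻¹ • x) := by
          rw [← hp.map_smul_of_nonneg _ (norm_nonneg x), smul_inv_smul₀ hx']
      _ ≤ ‖x‖ * C := by gcongr; exact (le_abs_self _).trans (hC _ hunit)
      _ = C * ‖x‖ := mul_comm _ _

end FiniteDimensional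

end IsSublinear

theorem le_add_two_mul_norm_sub_of_subadditive {E : Type*} [SeminormedAddCommGroup E]
    [Module ℝ E] {p : E → ℝ} (hp : ∀ x y, p (x + y) ≤ p x + p y) {C : ℝ}
    (hC : ∀ x, p x ≤ C * ‖x‖) {ℓ : E →ₗ[ℝ] ℝ} (hℓp : ∀ x, ℓ x ≤ p x) {c : E} (hℓc : ℓ c = p c)
    (x : E) : p x ≤ ℓ x + 2 * C * ‖x - c‖ := by
  have h₁ : p x ≤ p c + p (x - c) := by simpa using hp c (x - c)
  have h₂ : ℓ c = ℓ x + ℓ (c - x) := by rw [← map_add, add_sub_cancel]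
  have h₃ : ℓ (c - x) ≤ C * ‖x - c‖ := (hℓp _).trans ((hC _).trans_eq (by rw [norm_sub_rev]))
  linarith [hC (x - c)]

theorem exists_measurable_partition_subset_ball {X : Type*} [PseudoMetricSpace X]
    [CompactSpace X] [MeasurableSpace X] [OpensMeasurableSpace X] {δ : ℝ} (hδ : 0 < δ) :
    ∃ (m : ℕ) (U : Fin m → Set X) (c : Fin m → X), (∀ k, MeasurableSet (U k)) ∧
      Pairwise (Disjoint on U) ∧ (⋃ k, U k) = univ ∧ ∀ k, U k ⊆ ball (c k) δ := by
  obtain ⟨t, -, ht, hcover⟩ := finite_cover_balls_of_compact (isCompact_univ (X := X)) hδ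
  obtain ⟨m, c, -, rfl⟩ := ht.fin_param
  refine ⟨m, disjointed fun k => ball (c k) δ, c,
    fun k => disjointedRec (fun _ _ hs => hs.diff measurableSet_ball) measurableSet_ball,
    disjoint_disjointed _, ?_, disjointed_subset _⟩
  rw [iUnion_disjointed, eq_univ_iff_forall]
  intro x
  simpa using hcover (mem_univ x)

theorem integral_le_sum_setIntegral_add {X ι : Type*} [MeasurableSpace X] [Fintype ι]
    {ν : Measure X} [IsFiniteMeasure ν] {U : ι → Set X} (hU : ∀ k, MeasurableSet (U k))
    (hdisj : Pairwise (Disjoint on U)) (hcover : (⋃ k, U k) = univ) {f : X → ℝ}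
    {g : ι → X → ℝ} (hf : Integrable f ν) (hg : ∀ k, Integrable (g k) ν) {η : ℝ}
    (hfg : ∀ k, ∀ x ∈ U k, f x ≤ g k x + η) :
    ∫ x, f x ∂ν ≤ ∑ k, ∫ x in U k, g k x ∂ν + η * ν.real univ := by
  calc ∫ x, f x ∂ν = ∑ k, ∫ x in U k, f x ∂ν := by
        rw [← setIntegral_univ, ← hcover,
          integral_iUnion_fintype hU hdisj fun k => hf.integrableOn]
    _ ≤ ∑ k, ∫ x in U k, (g k x + η) ∂ν :=
        Finset.sum_le_sum fun k _ => setIntegral_mono_on hf.integrableOn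
          ((hg k).add (integrable_const η)).integrableOn (hU k) (hfg k)
    _ = ∑ k, ∫ x in U k, g k x ∂ν + η * ν.real univ := by
        rw [← hcover, measureReal_iUnion_fintype hdisj hU, Finset.mul_sum,
          ← Finset.sum_add_distrib]
        congr 1 with k
        rw [integral_add (hg k).integrableOn (integrable_const η), setIntegral_const,
          smul_eq_mul, mul_comm]

theorem integral_le_integral_sum_add {X ι : Type*} [TopologicalSpace X] [CompactSpace X]
    [MeasurableSpace X] [OpensMeasurableSpace X] [Fintype ι] {ν : Measure X} [IsFiniteMeasure ν]
    {μ : ι → Measure X} [∀ k, IsFiniteMeasure (μ k)] {U : ι → Set X}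
    (hU : ∀ k, MeasurableSet (U k)) (hdisj : Pairwise (Disjoint on U)) (hcover : (⋃ k, U k) = univ)
    {f : X → ℝ} (hf : Continuous f) {g : ι → X → ℝ} (hg : ∀ k, Continuous (g k))
    (hgμ : ∀ k, ∫ x, g k x ∂μ k = ∫ x in U k, g k x ∂ν) (hgf : ∀ k x, g k x ≤ f x) {η : ℝ}
    (hfg : ∀ k, ∀ x ∈ U k, f x ≤ g k x + η) :
    ∫ x, f x ∂ν ≤ ∫ x, f x ∂(∑ k, μ k) + η * ν.real univ := by
  have hint (ρ : Measure X) [IsFiniteMeasure ρ] {h : X → ℝ} (hh : Continuous h) :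
      Integrable h ρ :=
    hh.integrable_of_hasCompactSupport (.of_compactSpace h)
  calc ∫ x, f x ∂ν ≤ ∑ k, ∫ x in U k, g k x ∂ν + η * ν.real univ :=
        integral_le_sum_setIntegral_add hU hdisj hcover (hint ν hf) (fun k => hint ν (hg k)) hfg
    _ = ∑ k, ∫ x, g k x ∂μ k + η * ν.real univ := by simp only [hgμ]
    _ ≤ ∑ k, ∫ x, f x ∂μ k + η * ν.real univ :=
        add_le_add_left (Finset.sum_le_sum fun k _ =>
          integral_mono (hint (μ k) (hg k)) (hint (μ k) hf) (hgf k)) _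
    _ = ∫ x, f x ∂(∑ k, μ k) + η * ν.real univ := by
        rw [integral_finsetSum_measure fun k _ => hint (μ k) hf]

theorem le_of_forall_pos_le_add_mul {a b K : ℝ} (h : ∀ δ > 0, a ≤ b + δ * K) : a ≤ b := by
  have hlim : Tendsto (fun δ => b + δ * K) (𝓝[>] 0) (𝓝 b) :=
    tendsto_nhdsWithin_of_tendsto_nhds <|
      (by fun_prop : Continuous fun δ => b + δ * K).tendsto' 0 b (by simp)
  exact ge_of_tendsto hlim (eventually_nhdsWithin_of_forall h)

theorem reshetnyak_of_linMaj {N : ℕ}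
    (μ ν : Measure (UnitSphere N)) [IsFiniteMeasure μ] [IsFiniteMeasure ν]
    (hmaj : LinMaj N μ ν)
    (p : EuclideanSpace ℝ (Fin N) → ℝ)
    (hp_homog : ∀ t : ℝ, 0 ≤ t → ∀ x, p (t • x) = t * p x)
    (hp_subadd : ∀ x y, p (x + y) ≤ p x + p y) :
    ∫ z, p (z : EuclideanSpace ℝ (Fin N)) ∂ν
      ≤ ∫ z, p (z : EuclideanSpace ℝ (Fin N)) ∂μ := by
  have hp : IsSublinear p := ⟨hp_homog, hp_subadd⟩
  obtain ⟨C, hC0, hC⟩ := hp.exists_le_mul_norm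
  refine le_of_forall_pos_le_add_mul (K := 2 * C * ν.real univ) fun δ hδ => ?_
  obtain ⟨m, U, c, hU, hdisj, hcover, hball⟩ :=
    exists_measurable_partition_subset_ball (X := UnitSphere N) hδ
  obtain ⟨μk, hμk, rfl, hmom⟩ := hmaj m U hU hdisj hcover
  choose ℓ hℓp hℓc using fun k => hp.exists_linearMap_le_eq (c k : EuclideanSpace ℝ (Fin N))
  have hpU (k : Fin m) (z : UnitSphere N) (hz : z ∈ U k) : p z ≤ ℓ k z + δ * (2 * C) := by
    have hzc : ‖(z : EuclideanSpace ℝ (Fin N)) - c k‖ ≤ δ := by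
      rw [← dist_eq_norm, ← Subtype.dist_eq]
      exact (mem_ball.mp (hball k hz)).le
    calc p z ≤ ℓ k z + 2 * C * ‖(z : EuclideanSpace ℝ (Fin N)) - c k‖ :=
          le_add_two_mul_norm_sub_of_subadditive hp_subadd hC (hℓp k) (hℓc k) z
      _ ≤ ℓ k z + δ * (2 * C) := by rw [mul_comm δ]; gcongr
  have := hμk
  calc ∫ z, p z ∂ν ≤ ∫ z, p z ∂(∑ k, μk k) + δ * (2 * C) * ν.real univ :=
        integral_le_integral_sum_add hU hdisj hcover (hp.continuous.comp continuous_subtype_val)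
          (fun k => (ℓ k).continuous_of_finiteDimensional.comp continuous_subtype_val)
          (fun k => by simpa using hmom k (ℓ k).toContinuousLinearMap) (fun k z => hℓp k z) hpU
    _ = _ := by rw [mul_assoc]
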